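/- Let g, h : ℝ → ℝ be n-times differentiable. Then for every real x, dⁿ/dxⁿ [g(x²) h(x²)] = Σ_{k=0}^{n} C(n, k) · A_{n−k}(x) · B_k(x), where A_m(x) = m! Σ_{j=0}^{⌊m/2⌋} (2x)^{m−2j} / ((m−2j)! j!) · g^{(m−j)}(x²) and B_m(x) = m! Σ_{j=0}^{⌊m/2⌋} (2x)^{m−2j} / ((m−2j)! j!) · h^{(m−j)}(x²); i.e., the n-th derivative of the product decomposes binomially into the quantities A_m(x) = d^m/dx^m [g(x²)] and B_m(x) = d^m/dx^m [h(x²)]. -/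

import Mathlib

/-!
Induction on `n` gives `dⁿ/dxⁿ f(x²) = ∑ⱼ c(n, j) (2x)^(n-2j) f^(n-j)(x²)` with
`c(n, j) = n! / ((n-2j)! j!) = n.descFactorial (2j) / j!`. Differentiating the `j`-th term either
lowers the power of `2x`, contributing `2(n-2j) c(n, j)` to the term `j + 1` at order `n + 1`, or
raises both that power and the order of the derivative of `f`; so the claim propagates because
`c(n+1, j+1) = c(n, j+1) + 2(n-2j) c(n, j)`. The product formula is then Leibniz's rule.
-/

open Finset Nat

namespace Nat

theorem succ_descFactorial_succ_eq_add (n k : ℕ) :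
    (n + 1).descFactorial (k + 1) = n.descFactorial (k + 1) + (k + 1) * n.descFactorial k := by
  rw [succ_descFactorial_succ, descFactorial_succ]
  rcases le_or_gt k n with h | h
  · rw [← add_mul]; congr 1; omega
  · simp [descFactorial_of_lt h]

theorem succ_descFactorial_two_mul_add_two (n j : ℕ) :
    (n + 1).descFactorial (2 * j + 2) =
      n.descFactorial (2 * j + 2) + 2 * (j + 1) * (n - 2 * j) * n.descFactorial (2 * j) := by
  rw [succ_descFactorial_succ_eq_add, descFactorial_succ n (2 * j)]
  ring

end Nat

noncomputable def sqCompCoeff (K : Type*) [DivisionRing K] (n j : ℕ) : K :=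
  n.descFactorial (2 * j) / j !

section Coefficients

variable {K F : Type*} [Field K] [AddCommGroup F] [Module K F]

@[simp]
theorem sqCompCoeff_zero_right (n : ℕ) : sqCompCoeff K n 0 = 1 := by
  simp [sqCompCoeff]

theorem sqCompCoeff_of_lt {n j : ℕ} (h : n < 2 * j) : sqCompCoeff K n j = 0 := by
  simp [sqCompCoeff, descFactorial_of_lt h]

theorem sqCompCoeff_succ_succ [CharZero K] (n j : ℕ) :
    sqCompCoeff K (n + 1) (j + 1) =
      sqCompCoeff K n (j + 1) + 2 * (n - 2 * j : ℕ) * sqCompCoeff K n j := by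
  simp only [sqCompCoeff, mul_add, mul_one, succ_descFactorial_two_mul_add_two, factorial_succ]
  have : (j ! : K) ≠ 0 := Nat.cast_ne_zero.mpr (factorial_ne_zero j)
  push_cast
  field_simp

theorem sqCompCoeff_eq_factorial_div [CharZero K] {n j : ℕ} (h : 2 * j ≤ n) :
    sqCompCoeff K n j = n ! / ((n - 2 * j)! * j !) := by
  have : ((n - 2 * j)! : K) ≠ 0 := Nat.cast_ne_zero.mpr (factorial_ne_zero _)
  rw [sqCompCoeff, ← factorial_mul_descFactorial h]
  push_cast
  field_simp

theorem sum_range_sqCompCoeff_smul (n : ℕ) (v : ℕ → F) :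
    ∑ j ∈ range (n + 1), sqCompCoeff K n j • v j =
      ∑ j ∈ range (n / 2 + 1), sqCompCoeff K n j • v j := by
  refine (sum_subset (range_subset_range.mpr (by omega)) fun j _ hj => ?_).symm
  rw [sqCompCoeff_of_lt (by simp only [mem_range] at hj; omega), zero_smul]

theorem sum_range_sqCompCoeff_succ_smul [CharZero K] (n : ℕ) (P : ℕ → F) :
    ∑ j ∈ range (n + 2), sqCompCoeff K (n + 1) j • P j =
      ∑ j ∈ range (n + 1), sqCompCoeff K n j • P j +
        ∑ j ∈ range (n + 1), (2 * (n - 2 * j : ℕ) * sqCompCoeff K n j) • P (j + 1) := by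
  have hshift : ∑ j ∈ range (n + 2), sqCompCoeff K n j • P j =
      ∑ j ∈ range (n + 1), sqCompCoeff K n (j + 1) • P (j + 1) + P 0 := by
    simp [sum_range_succ' _ (n + 1)]
  rw [sum_range_succ, sqCompCoeff_of_lt (by omega : n < 2 * (n + 1)), zero_smul, add_zero] at hshift
  simp only [sum_range_succ' _ (n + 1), sqCompCoeff_succ_succ, add_smul, sum_add_distrib,
    sqCompCoeff_zero_right, one_smul, hshift]
  abel

end Coefficients

section

variable {𝕜 F : Type*} [NontriviallyNormedField 𝕜] [NormedAddCommGroup F] [NormedSpace 𝕜 F]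

theorem hasDerivAt_pow_smul_iteratedDeriv_comp_sq {f : 𝕜 → F} {m : ℕ}
    (hf : ContDiff 𝕜 (m + 1) f) (i : ℕ) (x : 𝕜) :
    HasDerivAt (fun t => (2 * t) ^ i • iteratedDeriv m f (t ^ 2))
      ((2 * i * (2 * x) ^ (i - 1)) • iteratedDeriv m f (x ^ 2) +
        (2 * x) ^ (i + 1) • iteratedDeriv (m + 1) f (x ^ 2)) x := by
  have hpow : HasDerivAt (fun t : 𝕜 => (2 * t) ^ i) (2 * i * (2 * x) ^ (i - 1)) x :=
    (((hasDerivAt_id' x).const_mul 2).fun_pow i).congr_deriv (by ring)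
  have hD : HasDerivAt (iteratedDeriv m f) (iteratedDeriv (m + 1) f (x ^ 2)) (x ^ 2) := by
    rw [iteratedDeriv_succ]
    exact (hf.differentiable_iteratedDeriv m (by exact_mod_cast lt_add_one m) _).hasDerivAt
  have hsq : HasDerivAt (fun t : 𝕜 => t ^ 2) (2 * x) x := by simpa using hasDerivAt_pow 2 x
  exact (hpow.smul (hD.scomp x hsq)).congr_deriv (by rw [smul_smul, add_comm, ← pow_succ]; rfl)

theorem iteratedDeriv_comp_sq [CharZero 𝕜] {n : ℕ} {f : 𝕜 → F} (hf : ContDiff 𝕜 n f) (x : 𝕜) :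
    iteratedDeriv n (fun t => f (t ^ 2)) x = ∑ j ∈ range (n + 1),
      sqCompCoeff 𝕜 n j • (2 * x) ^ (n - 2 * j) • iteratedDeriv (n - j) f (x ^ 2) := by
  induction n generalizing x with
  | zero => simp
  | succ n ih =>
    rw [iteratedDeriv_succ, funext (ih hf.of_succ)]
    have hterm (j : ℕ) (_ : j ∈ range (n + 1)) :=
      (hasDerivAt_pow_smul_iteratedDeriv_comp_sq (m := n - j) (hf.of_le (by norm_cast; omega))
        (n - 2 * j) x).fun_const_smul (sqCompCoeff 𝕜 n j)
    rw [(HasDerivAt.fun_sum hterm).deriv, sum_range_sqCompCoeff_succ_smul, ← sum_add_distrib]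
    refine sum_congr rfl fun j hj => ?_
    have hj : j ≤ n := Nat.lt_succ_iff.mp (mem_range.mp hj)
    rw [show n + 1 - 2 * (j + 1) = n - 2 * j - 1 by omega, show n + 1 - (j + 1) = n - j by omega,
      show n + 1 - j = n - j + 1 by omega]
    -- the truncated exponent `n + 1 - 2 * j` is only right for `2 * j ≤ n`
    rcases le_or_gt (2 * j) n with h | h
    · rw [show n + 1 - 2 * j = n - 2 * j + 1 by omega]
      module
    · simp [sqCompCoeff_of_lt h]

theorem iteratedDeriv_comp_sq_eq_factorial_mul_sum [CharZero 𝕜] {n : ℕ} {f : 𝕜 → 𝕜}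
    (hf : ContDiff 𝕜 n f) (x : 𝕜) :
    iteratedDeriv n (fun t => f (t ^ 2)) x = n ! * ∑ j ∈ range (n / 2 + 1),
      (2 * x) ^ (n - 2 * j) / ((n - 2 * j)! * j !) * iteratedDeriv (n - j) f (x ^ 2) := by
  rw [iteratedDeriv_comp_sq hf, sum_range_sqCompCoeff_smul, mul_sum]
  refine sum_congr rfl fun j hj => ?_
  rw [sqCompCoeff_eq_factorial_div (by simp only [mem_range] at hj; omega), smul_eq_mul,
    smul_eq_mul]
  ring

end

theorem iteratedDeriv_mul_comp_sq_binomial (n : ℕ) (g h : ℝ → ℝ)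
    (hg : ContDiff ℝ n g) (hh : ContDiff ℝ n h)
    (A B : ℕ → ℝ → ℝ)
    (hA : ∀ m : ℕ, ∀ x : ℝ, A m x =
      (m.factorial : ℝ) * ∑ j ∈ Finset.range (m / 2 + 1),
        (2 * x) ^ (m - 2 * j) / (((m - 2 * j).factorial : ℝ) * j.factorial) *
          iteratedDeriv (m - j) g (x ^ 2))
    (hB : ∀ m : ℕ, ∀ x : ℝ, B m x =
      (m.factorial : ℝ) * ∑ j ∈ Finset.range (m / 2 + 1),
        (2 * x) ^ (m - 2 * j) / (((m - 2 * j).factorial : ℝ) * j.factorial) *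
          iteratedDeriv (m - j) h (x ^ 2))
    (x : ℝ) :
    iteratedDeriv n (fun t => g (t ^ 2) * h (t ^ 2)) x =
      ∑ k ∈ Finset.range (n + 1), (n.choose k : ℝ) * A (n - k) x * B k x ∧
    (∀ m : ℕ, m ≤ n → A m x = iteratedDeriv m (fun t => g (t ^ 2)) x) ∧
    (∀ m : ℕ, m ≤ n → B m x = iteratedDeriv m (fun t => h (t ^ 2)) x) := by
  have hA' (m : ℕ) (hm : m ≤ n) : A m x = iteratedDeriv m (fun t => g (t ^ 2)) x :=
    (hA m x).trans
      (iteratedDeriv_comp_sq_eq_factorial_mul_sum (hg.of_le (by exact_mod_cast hm)) x).symm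
  have hB' (m : ℕ) (hm : m ≤ n) : B m x = iteratedDeriv m (fun t => h (t ^ 2)) x :=
    (hB m x).trans
      (iteratedDeriv_comp_sq_eq_factorial_mul_sum (hh.of_le (by exact_mod_cast hm)) x).symm
  refine ⟨?_, hA', hB'⟩
  have hsq : ContDiff ℝ n fun t : ℝ => t ^ 2 := contDiff_id.pow 2
  -- `iteratedDeriv_fun_mul` puts the `k`-th derivative on the first factor
  simp_rw [mul_comm (g _)]
  rw [iteratedDeriv_fun_mul (f := fun t => h (t ^ 2)) (g := fun t => g (t ^ 2))
    (hh.comp hsq).contDiffAt (hg.comp hsq).contDiffAt]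
  refine sum_congr rfl fun k hk => ?_
  rw [hA' (n - k) (Nat.sub_le n k), hB' k (Nat.lt_succ_iff.mp (mem_range.mp hk))]
  ring
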